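/- arXiv:1006.4499 — 4 statements merged into one kernel-verified Lean document; each statement's English description precedes it below -/
import Mathlib

section
/- Let 0 < q < 1, let k be a non-negative integer, let x ∈ [0,1], and let t be a real number with |t| < 1/(1-q). Then the generating function identity for the q-Bernstein basis holds: Σ_{n=0}^∞ b_{k,n}^q(x) · t^n/[n]_q! = (x^k t^k/[k]_q!) · Σ_{n=0}^∞ (1-x)_q^n · t^n/[n]_q!, where b_{k,n}^q(x) is taken to be 0 whenever n < k. In other words, b_{k,n}^q(x) is the coefficient of t^n/[n]_q! in the expansion of (x^k t^k/[k]_q!) · e_q((1-q)(1-x)_q t), where the q-exponential factor denotes the series Σ_{n=0}^∞ (1-x)_q^n t^n/[n]_q!. -/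
open Finset

/-- The q-integer `[n]_q = (1 - q^n)/(1 - q)`. -/
noncomputable def qInt (q : ℝ) (n : ℕ) : ℝ := (1 - q ^ n) / (1 - q)

/-- The q-factorial `[n]_q! = [n]_q [n-1]_q ⋯ [1]_q`, with `[0]_q! = 1`. -/
noncomputable def qFact (q : ℝ) (n : ℕ) : ℝ := ∏ i ∈ Finset.range n, qInt q (i + 1)

/-- The q-binomial coefficient `[n choose k]_q = [n]_q! / ([k]_q! [n-k]_q!)`. -/
noncomputable def qChoose (q : ℝ) (n k : ℕ) : ℝ := qFact q n / (qFact q k * qFact q (n - k))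

/-- The q-shifted product `(1 - x)_q^n = ∏_{s=0}^{n-1} (1 - q^s x)`. -/
noncomputable def qPoch (q x : ℝ) (n : ℕ) : ℝ := ∏ s ∈ Finset.range n, (1 - q ^ s * x)

/-- The q-Bernstein basis function `b_{k,n}^q(x) = [n choose k]_q x^k (1-x)_q^{n-k}`
for `k ≤ n`, taken to be `0` when `n < k`. -/
noncomputable def qBernstein (q : ℝ) (k n : ℕ) (x : ℝ) : ℝ :=
  if k ≤ n then qChoose q n k * x ^ k * qPoch q x (n - k) else 0

/-! Since `b_{k,n}^q` vanishes for `n < k`, the series can be reindexed by `n ↦ n + k`; there the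
`[n+k]_q!` in the numerator of `[n+k choose k]_q` cancels the denominator, leaving the term
`x^k t^k/[k]_q! · (1-x)_q^n t^n/[n]_q!`, and the constant factor comes out of the sum. -/

theorem tsum_eq_tsum_nat_add_of_eq_zero {M : Type*} [AddCommMonoid M] [TopologicalSpace M]
    {f : ℕ → M} {k : ℕ} (hf : ∀ n < k, f n = 0) :
    ∑' n, f n = ∑' n, f (n + k) := by
  refine ((add_left_injective k).tsum_eq fun n hn => ?_).symm
  have hkn : k ≤ n := by
    by_contra! hnk
    exact hn (hf n hnk)
  exact ⟨n - k, Nat.sub_add_cancel hkn⟩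

section

variable {q : ℝ}

theorem qInt_pos (hq : |q| < 1) {n : ℕ} (hn : n ≠ 0) : 0 < qInt q n := by
  have hqn : q ^ n < 1 := calc
    q ^ n ≤ |q| ^ n := abs_pow q n ▸ le_abs_self _
    _ < 1 := pow_lt_one₀ (abs_nonneg q) hq hn
  exact div_pos (by linarith) (by linarith [le_abs_self q])

theorem qFact_pos (hq : |q| < 1) (n : ℕ) : 0 < qFact q n :=
  prod_pos fun i _ => qInt_pos hq i.succ_ne_zero

theorem qBernstein_of_lt {k n : ℕ} (h : n < k) (x : ℝ) : qBernstein q k n x = 0 :=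
  if_neg h.not_ge

theorem qBernstein_add_mul_div_qFact (hq : |q| < 1) (k n : ℕ) (x t : ℝ) :
    qBernstein q k (n + k) x * t ^ (n + k) / qFact q (n + k) =
      x ^ k * t ^ k / qFact q k * (qPoch q x n * t ^ n / qFact q n) := by
  have hfact (m : ℕ) : qFact q m ≠ 0 := (qFact_pos hq m).ne'
  rw [qBernstein, if_pos (Nat.le_add_left k n), qChoose, Nat.add_sub_cancel, pow_add]
  field_simp [hfact k, hfact n, hfact (n + k)]

end

theorem qBernstein_generating_function_general (q : ℝ) (hq0 : 0 < q) (hq1 : q < 1)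
    (k : ℕ) (x : ℝ) (t : ℝ) :
    ∑' n : ℕ, qBernstein q k n x * t ^ n / qFact q n =
      (x ^ k * t ^ k / qFact q k) * ∑' n : ℕ, qPoch q x n * t ^ n / qFact q n := by
  have hq : |q| < 1 := abs_lt.2 ⟨by linarith, hq1⟩
  rw [tsum_eq_tsum_nat_add_of_eq_zero (k := k) fun n hn => by
        rw [qBernstein_of_lt hn, zero_mul, zero_div],
    ← tsum_mul_left]
  exact tsum_congr fun n => qBernstein_add_mul_div_qFact hq k n x t

/-- Generating function for the q-Bernstein basis:
`Σ_{n=0}^∞ b_{k,n}^q(x) t^n/[n]_q! = (x^k t^k/[k]_q!) Σ_{n=0}^∞ (1-x)_q^n t^n/[n]_q!`. -/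
theorem qBernstein_generating_function (q : ℝ) (hq0 : 0 < q) (hq1 : q < 1)
    (k : ℕ) (x : ℝ) (hx : x ∈ Set.Icc (0 : ℝ) 1)
    (t : ℝ) (ht : |t| < 1 / (1 - q)) :
    ∑' n : ℕ, qBernstein q k n x * t ^ n / qFact q n =
      (x ^ k * t ^ k / qFact q k) * ∑' n : ℕ, qPoch q x n * t ^ n / qFact q n :=
  qBernstein_generating_function_general q hq0 hq1 k x t
end

section
/- Let 0 < q < 1 and let x be a real number with |x| < 1. Then ∏_{s=0}^∞ (1 - q^s x)^{-1} = Σ_{k=0}^∞ x^k / ((1-q)(1-q^2)⋯(1-q^k)); that is, the limit as n → ∞ of 1/(1-x)_q^n equals the q-exponential series e_q(x). -/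
/-!
Put `f = e_q`. Comparing coefficients, `f y - f (q y) = y f y`, so iterating
`(1 - y) f y = f (q y)` gives `(1 - x)_q^n f x = f (q^n x)`. Since `log (1 - t) ≥ -t / (1 - t)`,
the denominators `(q; q)_k` are bounded below by `exp (-q / (1 - q)^2) > 0`, uniformly in `k`;
hence the series for `f (q^n x)` is dominated by a geometric series and tends to `f 0 = 1`.
-/

open Finset Filter Topology

/-- `qPochhammer a q n = (a; q)_n`, written `(1 - a)_q^n` in the paper. -/
def qPochhammer (a q : ℝ) (n : ℕ) : ℝ := ∏ s ∈ range n, (1 - a * q ^ s)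

noncomputable def qExp (q y : ℝ) : ℝ := ∑' k, y ^ k / qPochhammer q q k

theorem qPochhammer_succ (a q : ℝ) (n : ℕ) :
    qPochhammer a q (n + 1) = qPochhammer a q n * (1 - a * q ^ n) :=
  prod_range_succ _ _

theorem Real.exp_neg_div_le_one_sub {t b : ℝ} (ht0 : 0 ≤ t) (htb : t ≤ b) (hb : b < 1) :
    Real.exp (-(t / (1 - b))) ≤ 1 - t := by
  have h1t : 0 < 1 - t := by linarith
  calc Real.exp (-(t / (1 - b))) ≤ Real.exp (1 - (1 - t)⁻¹) := by
        rw [Real.exp_le_exp, show 1 - (1 - t)⁻¹ = -(t / (1 - t)) by field_simp; ring,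
          neg_le_neg_iff]
        gcongr
    _ ≤ Real.exp (Real.log (1 - t)) := Real.exp_le_exp.2 (Real.one_sub_inv_le_log_of_pos h1t)
    _ = 1 - t := Real.exp_log h1t

theorem exp_neg_le_qPochhammer {a q : ℝ} (ha0 : 0 ≤ a) (ha1 : a < 1) (hq0 : 0 ≤ q) (hq1 : q < 1)
    (n : ℕ) : Real.exp (-(a / ((1 - a) * (1 - q)))) ≤ qPochhammer a q n := by
  have hfactor (s : ℕ) : Real.exp (-(a * q ^ s / (1 - a))) ≤ 1 - a * q ^ s :=
    Real.exp_neg_div_le_one_sub (by positivity)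
      (mul_le_of_le_one_right ha0 (pow_le_one₀ hq0 hq1.le)) ha1
  have hgeom : ∑ s ∈ range n, q ^ s ≤ 1 / (1 - q) := by
    simpa using geom_sum_Ico_le_of_lt_one (m := 0) (n := n) hq0 hq1
  calc Real.exp (-(a / ((1 - a) * (1 - q))))
      ≤ Real.exp (-(a / (1 - a) * ∑ s ∈ range n, q ^ s)) := by
        rw [Real.exp_le_exp, neg_le_neg_iff, ← div_div, div_eq_mul_one_div (a / (1 - a))]
        gcongr
    _ = ∏ s ∈ range n, Real.exp (-(a * q ^ s / (1 - a))) := by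
        rw [← Real.exp_sum, mul_sum, ← sum_neg_distrib]
        congr 1
        refine sum_congr rfl fun s _ => ?_
        ring
    _ ≤ qPochhammer a q n := prod_le_prod (fun s _ => (Real.exp_pos _).le) fun s _ => hfactor s

section qExp

variable {q : ℝ}

theorem abs_pow_div_qPochhammer_le (hq0 : 0 ≤ q) (hq1 : q < 1) (y : ℝ) (k : ℕ) :
    |y ^ k / qPochhammer q q k| ≤ |y| ^ k / Real.exp (-(q / ((1 - q) * (1 - q)))) := by
  have hP := exp_neg_le_qPochhammer hq0 hq1 hq0 hq1 k
  rw [abs_div, abs_pow, abs_of_pos ((Real.exp_pos _).trans_le hP)]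
  gcongr

theorem summable_pow_div_qPochhammer (hq0 : 0 ≤ q) (hq1 : q < 1) {y : ℝ} (hy : |y| < 1) :
    Summable fun k => y ^ k / qPochhammer q q k :=
  ((summable_geometric_of_lt_one (abs_nonneg y) hy).div_const _).of_norm_bounded
    (abs_pow_div_qPochhammer_le hq0 hq1 y)

theorem one_sub_mul_qExp (hq0 : 0 ≤ q) (hq1 : q < 1) {y : ℝ} (hy : |y| < 1) :
    (1 - y) * qExp q y = qExp q (q * y) := by
  have hqy : |q * y| < 1 := by
    rw [abs_mul, abs_of_nonneg hq0]
    nlinarith [abs_nonneg y]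
  have hS := summable_pow_div_qPochhammer hq0 hq1 hy
  have hSq := summable_pow_div_qPochhammer hq0 hq1 hqy
  have hterm (k : ℕ) :
      y ^ (k + 1) / qPochhammer q q (k + 1) - (q * y) ^ (k + 1) / qPochhammer q q (k + 1)
        = y * (y ^ k / qPochhammer q q k) := by
    have hP : qPochhammer q q k ≠ 0 :=
      ((Real.exp_pos _).trans_le (exp_neg_le_qPochhammer hq0 hq1 hq0 hq1 k)).ne'
    have hfactor : 1 - q * q ^ k ≠ 0 := by
      have : q * q ^ k < 1 := by nlinarith [pow_le_one₀ hq0 hq1.le (n := k)]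
      exact (sub_pos.2 this).ne'
    rw [qPochhammer_succ, mul_pow, pow_succ']
    field_simp
    ring
  have hdiff : qExp q y - qExp q (q * y) = y * qExp q y := by
    rw [qExp, qExp, ← hS.tsum_sub hSq, (hS.sub hSq).tsum_eq_zero_add, tsum_congr hterm,
      tsum_mul_left]
    simp
  linear_combination hdiff

theorem abs_mul_pow_le (hq0 : 0 ≤ q) (hq1 : q < 1) (x : ℝ) (n : ℕ) : |x * q ^ n| ≤ |x| := by
  rw [abs_mul, abs_of_nonneg (pow_nonneg hq0 n)]
  exact mul_le_of_le_one_right (abs_nonneg x) (pow_le_one₀ hq0 hq1.le)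

theorem qPochhammer_mul_qExp (hq0 : 0 ≤ q) (hq1 : q < 1) {x : ℝ} (hx : |x| < 1) (n : ℕ) :
    qPochhammer x q n * qExp q x = qExp q (x * q ^ n) := by
  induction n with
  | zero => simp [qPochhammer]
  | succ n ih =>
    rw [qPochhammer_succ, mul_right_comm, ih, mul_comm _ (1 - _),
      one_sub_mul_qExp hq0 hq1 ((abs_mul_pow_le hq0 hq1 x n).trans_lt hx), pow_succ]
    ring_nf

theorem tendsto_qExp_mul_pow (hq0 : 0 ≤ q) (hq1 : q < 1) {x : ℝ} (hx : |x| < 1) :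
    Tendsto (fun n : ℕ => qExp q (x * q ^ n)) atTop (𝓝 1) := by
  have hterm (k : ℕ) : Tendsto (fun n : ℕ => (x * q ^ n) ^ k / qPochhammer q q k) atTop
      (𝓝 ((0 : ℝ) ^ k / qPochhammer q q k)) := by
    have := (tendsto_pow_atTop_nhds_zero_of_lt_one hq0 hq1).const_mul x
    rw [mul_zero] at this
    exact (this.pow k).div_const _
  have hbound : ∀ n k, ‖(x * q ^ n) ^ k / qPochhammer q q k‖
      ≤ |x| ^ k / Real.exp (-(q / ((1 - q) * (1 - q)))) := fun n k => by
    refine (abs_pow_div_qPochhammer_le hq0 hq1 _ k).trans ?_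
    gcongr ?_ ^ k / _
    exact abs_mul_pow_le hq0 hq1 x n
  have hsum_zero : ∑' k, (0 : ℝ) ^ k / qPochhammer q q k = 1 := by
    rw [tsum_eq_single 0 fun k hk => by simp [hk]]
    simp [qPochhammer]
  rw [← hsum_zero]
  exact tendsto_tsum_of_dominated_convergence
    ((summable_geometric_of_lt_one (abs_nonneg x) hx).div_const _) hterm
    (Eventually.of_forall hbound)

theorem tendsto_inv_qPochhammer (hq0 : 0 ≤ q) (hq1 : q < 1) {x : ℝ} (hx : |x| < 1) :
    Tendsto (fun n : ℕ => (qPochhammer x q n)⁻¹) atTop (𝓝 (qExp q x)) := by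
  have hmul : Tendsto (fun n : ℕ => qPochhammer x q n * qExp q x) atTop (𝓝 1) :=
    (tendsto_qExp_mul_pow hq0 hq1 hx).congr fun n => (qPochhammer_mul_qExp hq0 hq1 hx n).symm
  have hne : qExp q x ≠ 0 := by
    intro h
    simp [h] at hmul
  convert (hmul.inv₀ one_ne_zero).const_mul (qExp q x) using 2 with n
  · rw [mul_inv, mul_left_comm, mul_inv_cancel₀ hne, mul_one]
  · simp

end qExp

/-- Limit of `1/(1-x)_q^n = (∏_{s=0}^{n-1}(1 - q^s x))⁻¹` as `n → ∞` is the
q-exponential series `e_q(x) = Σ_{k=0}^∞ x^k / ((1-q)(1-q^2)⋯(1-q^k))`. -/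
theorem tendsto_inv_qPoch_eq_qExp (q : ℝ) (hq0 : 0 < q) (hq1 : q < 1)
    (x : ℝ) (hx : |x| < 1) :
    Tendsto (fun n : ℕ => (∏ s ∈ Finset.range n, (1 - q ^ s * x))⁻¹) atTop
      (𝓝 (∑' k : ℕ, x ^ k / ∏ i ∈ Finset.range k, (1 - q ^ (i + 1)))) := by
  convert tendsto_inv_qPochhammer hq0.le hq1 hx using 3 with n
  · exact prod_congr rfl fun s _ => by ring
  · exact tsum_congr fun k => by simp only [qPochhammer, pow_succ']
end

section
/- Let 0 < q < 1 and let x be any real number. Then ∏_{s=0}^∞ (1 + q^s x) = Σ_{k=0}^∞ q^{k(k-1)/2} x^k / ((1-q)(1-q^2)⋯(1-q^k)); that is, the limit as n → ∞ of (1+x)_q^n equals the q-exponential series E_q(x). -/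
open Finset Filter Topology

/-!
By the finite q-binomial theorem (Rothe),
`∏_{s<n} (1 + q^s x) = ∑_{k≤n} (1 - q^n)(1 - q^(n-1))⋯(1 - q^(n-k+1)) · e_k`,
where `e_k` is the `k`-th term of `E_q(x)`. For `|q| < 1` each coefficient tends to `1` as
`n → ∞` and is bounded by `2^k`, while `∑ 2^k |e_k|` converges by the ratio test
(`e_{k+1} / e_k = q^k x / (1 - q^(k+1)) → 0`); Tannery's theorem passes to the limit termwise.
-/

section Field

variable {K : Type*} [Field K]

def qFactorial (q : K) (k : ℕ) : K :=
  ∏ i ∈ range k, (1 - q ^ (i + 1))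

/-- `(1 - q^n)(1 - q^(n-1))⋯(1 - q^(n-k+1))`; for `k > n` the truncated exponent produces the
factor `1 - q^0`, so the product vanishes. -/
def qDescFactorial (q : K) (n k : ℕ) : K :=
  ∏ i ∈ range k, (1 - q ^ (n - i))

def qExpTerm (q x : K) (k : ℕ) : K :=
  q ^ (k * (k - 1) / 2) * x ^ k / qFactorial q k

theorem qFactorial_succ (q : K) (k : ℕ) :
    qFactorial q (k + 1) = qFactorial q k * (1 - q ^ (k + 1)) :=
  prod_range_succ _ _

theorem qDescFactorial_zero_right (q : K) (n : ℕ) : qDescFactorial q n 0 = 1 :=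
  prod_range_zero _

theorem qDescFactorial_eq_zero_of_lt (q : K) {n k : ℕ} (h : n < k) : qDescFactorial q n k = 0 :=
  prod_eq_zero (mem_range.2 h) (by simp)

theorem qDescFactorial_succ (q : K) (n k : ℕ) :
    qDescFactorial q n (k + 1) = qDescFactorial q n k * (1 - q ^ (n - k)) :=
  prod_range_succ _ _

theorem qDescFactorial_succ_succ (q : K) (n k : ℕ) :
    qDescFactorial q (n + 1) (k + 1) = (1 - q ^ (n + 1)) * qDescFactorial q n k := by
  simp [qDescFactorial, prod_range_succ', mul_comm]

theorem qExpTerm_zero (q x : K) : qExpTerm q x 0 = 1 := by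
  simp [qExpTerm, qFactorial]

theorem qExpTerm_succ (q x : K) (k : ℕ) :
    qExpTerm q x (k + 1) = qExpTerm q x k * (q ^ k * x / (1 - q ^ (k + 1))) := by
  rw [qExpTerm, qExpTerm, div_mul_div_comm, qFactorial_succ, Nat.triangle_succ]
  ring

theorem qDescFactorial_mul_qExpTerm_succ_succ {q : K} (x : K) {n k : ℕ}
    (hq : q ^ (k + 1) ≠ 1) (hk : k ≤ n) :
    qDescFactorial q (n + 1) (k + 1) * qExpTerm q x (k + 1) =
      qDescFactorial q n (k + 1) * qExpTerm q x (k + 1) +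
        q ^ n * x * (qDescFactorial q n k * qExpTerm q x k) := by
  have hpow : q ^ k * q ^ (n - k) = q ^ n := by rw [← pow_add, Nat.add_sub_cancel' hk]
  have hden : 1 - q ^ (k + 1) ≠ 0 := sub_ne_zero.2 hq.symm
  rw [qDescFactorial_succ_succ, qDescFactorial_succ, qExpTerm_succ]
  field_simp
  linear_combination (qDescFactorial q n k * qExpTerm q x k * x) * hpow

theorem prod_one_add_pow_mul_eq_sum {q : K} (hq : ∀ i, q ^ (i + 1) ≠ 1) (x : K) (n : ℕ) :
    ∏ s ∈ range n, (1 + q ^ s * x) =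
      ∑ k ∈ range (n + 1), qDescFactorial q n k * qExpTerm q x k := by
  induction n with
  | zero => simp [qDescFactorial_zero_right, qExpTerm_zero]
  | succ n ih =>
    have hshift : ∑ k ∈ range (n + 1), qDescFactorial q n (k + 1) * qExpTerm q x (k + 1) + 1 =
        ∑ k ∈ range (n + 1), qDescFactorial q n k * qExpTerm q x k := by
      rw [sum_range_succ, qDescFactorial_eq_zero_of_lt q (Nat.lt_succ_self n), zero_mul, add_zero,
        sum_range_succ' _ n, qDescFactorial_zero_right, qExpTerm_zero, one_mul]
    rw [prod_range_succ, ih, sum_range_succ' _ (n + 1),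
      sum_congr rfl fun k hk ↦ qDescFactorial_mul_qExpTerm_succ_succ x (hq k)
        (Nat.lt_succ_iff.1 (mem_range.1 hk)), sum_add_distrib,
      ← mul_sum, qDescFactorial_zero_right, qExpTerm_zero, one_mul, add_right_comm, hshift]
    ring

end Field

section Normed

variable {𝕜 : Type*} [NormedField 𝕜] {q : 𝕜}

theorem pow_succ_ne_one_of_norm_lt_one (hq : ‖q‖ < 1) (i : ℕ) : q ^ (i + 1) ≠ 1 :=
  ne_of_apply_ne norm <| by
    rw [norm_pow, norm_one]; exact (pow_lt_one₀ (norm_nonneg q) hq i.succ_ne_zero).ne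

theorem tendsto_qExpTerm_ratio (hq : ‖q‖ < 1) (x : 𝕜) :
    Tendsto (fun k ↦ q ^ k * x / (1 - q ^ (k + 1))) atTop (𝓝 0) := by
  have hpow := tendsto_pow_atTop_nhds_zero_of_norm_lt_one hq
  have hden : Tendsto (fun k ↦ 1 - q ^ (k + 1)) atTop (𝓝 (1 - 0)) :=
    tendsto_const_nhds.sub (hpow.comp (tendsto_add_atTop_nat 1))
  have hlim := (hpow.mul_const x).div hden (by simp)
  rwa [zero_mul, zero_div] at hlim

theorem summable_pow_mul_norm_qExpTerm (hq : ‖q‖ < 1) (x : 𝕜) (C : ℝ) :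
    Summable fun k ↦ C ^ k * ‖qExpTerm q x k‖ := by
  have hratio : ∀ᶠ k in atTop, |C| * ‖q ^ k * x / (1 - q ^ (k + 1))‖ ≤ 1 / 2 := by
    have h := ((tendsto_qExpTerm_ratio hq x).norm.const_mul |C|).eventually
      (ge_mem_nhds (a := 1 / 2) (by norm_num))
    simpa using h
  refine summable_of_ratio_norm_eventually_le (r := 1 / 2) (by norm_num) ?_
  filter_upwards [hratio] with k hk
  calc ‖C ^ (k + 1) * ‖qExpTerm q x (k + 1)‖‖
      = ‖C ^ k * ‖qExpTerm q x k‖‖ * (|C| * ‖q ^ k * x / (1 - q ^ (k + 1))‖) := by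
        simp only [qExpTerm_succ, norm_mul, norm_pow, Real.norm_eq_abs, abs_norm]
        ring
    _ ≤ ‖C ^ k * ‖qExpTerm q x k‖‖ * (1 / 2) := by gcongr
    _ = 1 / 2 * ‖C ^ k * ‖qExpTerm q x k‖‖ := mul_comm _ _

theorem norm_qDescFactorial_le (hq : ‖q‖ ≤ 1) (n k : ℕ) : ‖qDescFactorial q n k‖ ≤ 2 ^ k := by
  have hfactor : ∀ i ∈ range k, ‖1 - q ^ (n - i)‖ ≤ 2 := fun i _ ↦
    calc ‖1 - q ^ (n - i)‖ ≤ ‖(1 : 𝕜)‖ + ‖q‖ ^ (n - i) := by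
          rw [← norm_pow]; exact norm_sub_le _ _
      _ ≤ 1 + 1 := by rw [norm_one]; gcongr; exact pow_le_one₀ (norm_nonneg q) hq
      _ = 2 := one_add_one_eq_two
  calc ‖qDescFactorial q n k‖ ≤ ∏ i ∈ range k, ‖1 - q ^ (n - i)‖ := norm_prod_le _ _
    _ ≤ ∏ _i ∈ range k, (2 : ℝ) := prod_le_prod (fun i _ ↦ norm_nonneg _) hfactor
    _ = 2 ^ k := by rw [prod_const, card_range]

theorem tendsto_qDescFactorial (hq : ‖q‖ < 1) (k : ℕ) :
    Tendsto (fun n ↦ qDescFactorial q n k) atTop (𝓝 1) := by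
  have hpow := tendsto_pow_atTop_nhds_zero_of_norm_lt_one hq
  simpa [qDescFactorial] using tendsto_finsetProd (range k) (f := fun i n ↦ 1 - q ^ (n - i))
    fun i _ ↦ tendsto_const_nhds.sub (hpow.comp (tendsto_sub_atTop_nat i))

theorem tendsto_prod_one_add_pow_mul [CompleteSpace 𝕜] (hq : ‖q‖ < 1) (x : 𝕜) :
    Tendsto (fun n ↦ ∏ s ∈ range n, (1 + q ^ s * x)) atTop (𝓝 (∑' k, qExpTerm q x k)) := by
  have hlim : Tendsto (fun n ↦ ∑' k, qDescFactorial q n k * qExpTerm q x k) atTop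
      (𝓝 (∑' k, qExpTerm q x k)) := by
    refine tendsto_tsum_of_dominated_convergence (summable_pow_mul_norm_qExpTerm hq x 2)
      (fun k ↦ by simpa using (tendsto_qDescFactorial hq k).mul_const (qExpTerm q x k))
      (Eventually.of_forall fun n k ↦ ?_)
    rw [norm_mul]
    gcongr
    exact norm_qDescFactorial_le hq.le n k
  refine hlim.congr fun n ↦ ?_
  rw [prod_one_add_pow_mul_eq_sum (pow_succ_ne_one_of_norm_lt_one hq) x n]
  refine tsum_eq_sum fun k hk ↦ ?_
  rw [qDescFactorial_eq_zero_of_lt q (by simpa using hk), zero_mul]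

end Normed

/-- Limit of `(1+x)_q^n = ∏_{s=0}^{n-1}(1 + q^s x)` as `n → ∞` is the
q-exponential series `E_q(x) = Σ_{k=0}^∞ q^{k(k-1)/2} x^k / ((1-q)(1-q^2)⋯(1-q^k))`. -/
theorem tendsto_qPochPlus_eq_qExpE (q : ℝ) (hq0 : 0 < q) (hq1 : q < 1) (x : ℝ) :
    Tendsto (fun n : ℕ => ∏ s ∈ Finset.range n, (1 + q ^ s * x)) atTop
      (𝓝 (∑' k : ℕ,
        q ^ (k * (k - 1) / 2) * x ^ k / ∏ i ∈ Finset.range k, (1 - q ^ (i + 1)))) :=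
  tendsto_prod_one_add_pow_mul (abs_lt.2 ⟨by linarith, hq1⟩) x
end

section
/- Let 0 < q < 1 and let x be a real number with |x| < 1. Then e_q(x) · E_q(-x) = 1, i.e. (Σ_{k=0}^∞ x^k / ((1-q)(1-q^2)⋯(1-q^k))) · (Σ_{k=0}^∞ q^{k(k-1)/2} (-x)^k / ((1-q)(1-q^2)⋯(1-q^k))) = 1. -/
/-!
For `|y| < 1` the two series satisfy the functional equations
`e_q(q y) = (1 - y) e_q(y)` and `E_q(y) = (1 + y) E_q(q y)`, so `f(y) = e_q(y) E_q(-y)` satisfies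
`f(q y) = f(y)`. Hence `f(x) = f(q^n x)` for all `n`, and `f(q^n x) → e_q(0) E_q(0) = 1` by
dominated convergence.
-/

open Finset Filter Topology

namespace QExp

variable {q : ℝ}

/-- The `q`-Pochhammer symbol `(q; q)_k`. -/
noncomputable def qPoch (q : ℝ) (k : ℕ) : ℝ := ∏ i ∈ range k, (1 - q ^ (i + 1))

lemma qPoch_succ (k : ℕ) : qPoch q (k + 1) = qPoch q k * (1 - q ^ (k + 1)) :=
  prod_range_succ _ _

lemma abs_pow_le_one (hq : |q| ≤ 1) (n : ℕ) : |q ^ n| ≤ 1 := by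
  rw [abs_pow]
  exact pow_le_one₀ (abs_nonneg q) hq

lemma abs_pow_lt_one (hq : |q| < 1) {n : ℕ} (hn : n ≠ 0) : |q ^ n| < 1 := by
  rw [abs_pow]
  exact pow_lt_one₀ (abs_nonneg q) hq hn

lemma one_sub_pow_pos (hq : |q| < 1) {n : ℕ} (hn : n ≠ 0) : 0 < 1 - q ^ n := by
  linarith [le_abs_self (q ^ n), abs_pow_lt_one hq hn]

lemma qPoch_pos (hq : |q| < 1) (k : ℕ) : 0 < qPoch q k :=
  prod_pos fun i _ => one_sub_pow_pos hq i.succ_ne_zero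

lemma abs_pow_mul_le (hq : |q| ≤ 1) (n : ℕ) (y : ℝ) : |q ^ n * y| ≤ |y| := by
  rw [abs_mul]
  exact mul_le_of_le_one_left (abs_nonneg y) (abs_pow_le_one hq n)

lemma summable_pow_div_qPoch (hq : |q| < 1) {y : ℝ} (hy : |y| < 1) :
    Summable fun k => y ^ k / qPoch q k := by
  obtain ⟨r, hyr, hr1⟩ := exists_between hy
  refine summable_of_ratio_norm_eventually_le hr1 ?_
  have hratio : Tendsto (fun k : ℕ => |y| / (1 - q ^ (k + 1))) atTop (𝓝 |y|) := by
    have hpow : Tendsto (fun k : ℕ => q ^ (k + 1)) atTop (𝓝 0) :=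
      (tendsto_pow_atTop_nhds_zero_of_abs_lt_one hq).comp (tendsto_add_atTop_nat 1)
    simpa only [sub_zero, div_one, Pi.div_def] using
      tendsto_const_nhds.div (hpow.const_sub 1) (by norm_num : (1 : ℝ) - 0 ≠ 0)
  filter_upwards [hratio.eventually (ge_mem_nhds hyr)] with k hk
  have hnorm : ‖y ^ (k + 1) / qPoch q (k + 1)‖
      = |y| / (1 - q ^ (k + 1)) * ‖y ^ k / qPoch q k‖ := by
    have := (one_sub_pow_pos hq k.succ_ne_zero).ne'
    rw [Real.norm_eq_abs, Real.norm_eq_abs, qPoch_succ, abs_div, abs_div, abs_mul,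
      abs_of_pos (one_sub_pow_pos hq k.succ_ne_zero), pow_succ, abs_mul]
    field_simp
  rw [hnorm]
  exact mul_le_mul_of_nonneg_right hk (norm_nonneg _)

noncomputable def qSeries (c : ℕ → ℝ) (q y : ℝ) : ℝ := ∑' k, c k * y ^ k / qPoch q k

variable {c : ℕ → ℝ} {C : ℝ}

lemma summable_qSeries (hq : |q| < 1) (hc : ∀ k, |c k| ≤ C) {y : ℝ} (hy : |y| < 1) :
    Summable fun k => c k * y ^ k / qPoch q k := by
  refine ((summable_pow_div_qPoch hq hy).abs.mul_left C).of_norm_bounded fun k => ?_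
  rw [Real.norm_eq_abs, mul_div_assoc, abs_mul]
  exact mul_le_mul_of_nonneg_right (hc k) (abs_nonneg _)

/-- The factor `1 - q^k` of `y^k - (q y)^k` cancels the last factor of `(q; q)_k`. -/
lemma qSeries_sub_qSeries_mul (hq : |q| < 1) (hc : ∀ k, |c k| ≤ C) {y : ℝ} (hy : |y| < 1) :
    qSeries c q y - qSeries c q (q * y) = y * qSeries (fun k => c (k + 1)) q y := by
  have hqy : |q * y| < 1 := by
    simpa using (abs_pow_mul_le hq.le 1 y).trans_lt hy
  have hs := summable_qSeries hq hc hy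
  have hsq := summable_qSeries hq hc hqy
  rw [qSeries, qSeries, ← hs.tsum_sub hsq, (hs.sub hsq).tsum_eq_zero_add, qSeries,
    ← tsum_mul_left]
  simp only [pow_zero, mul_one, sub_self, zero_add]
  refine tsum_congr fun k => ?_
  have := (one_sub_pow_pos hq k.succ_ne_zero).ne'
  have := (qPoch_pos hq k).ne'
  rw [qPoch_succ, mul_pow]
  field_simp
  ring

lemma tendsto_qSeries_pow_mul (hq : |q| < 1) (hc : ∀ k, |c k| ≤ C) {x : ℝ} (hx : |x| < 1) :
    Tendsto (fun n : ℕ => qSeries c q (q ^ n * x)) atTop (𝓝 (c 0)) := by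
  have hterm : ∀ k, Tendsto (fun n : ℕ => c k * (q ^ n * x) ^ k / qPoch q k) atTop
      (𝓝 (if k = 0 then c 0 else 0)) := by
    intro k
    rcases eq_or_ne k 0 with rfl | hk
    · simp [qPoch]
    have hpow : (fun n : ℕ => c k * (q ^ n * x) ^ k / qPoch q k)
        = fun n => (q ^ k) ^ n * (c k * x ^ k / qPoch q k) := by
      ext n
      ring
    rw [hpow, if_neg hk]
    simpa using
      (tendsto_pow_atTop_nhds_zero_of_abs_lt_one (abs_pow_lt_one hq hk)).mul_const
        (c k * x ^ k / qPoch q k)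
  have hbound : ∀ n k, ‖c k * (q ^ n * x) ^ k / qPoch q k‖ ≤ C * (|x| ^ k / qPoch q k) := by
    intro n k
    rw [Real.norm_eq_abs, mul_div_assoc, abs_mul, abs_div, abs_pow,
      abs_of_pos (qPoch_pos hq k)]
    have hpow : |q ^ n * x| ^ k / qPoch q k ≤ |x| ^ k / qPoch q k :=
      div_le_div_of_nonneg_right (pow_le_pow_left₀ (abs_nonneg _) (abs_pow_mul_le hq.le n x) k)
        (qPoch_pos hq k).le
    exact mul_le_mul (hc k) hpow (div_nonneg (by positivity) (qPoch_pos hq k).le)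
      ((abs_nonneg _).trans (hc k))
  have hsum : Summable fun k => C * (|x| ^ k / qPoch q k) :=
    (summable_pow_div_qPoch hq (y := |x|) (by rwa [abs_abs])).mul_left C
  have hlim := tendsto_tsum_of_dominated_convergence hsum hterm (.of_forall hbound)
  rwa [tsum_ite_eq] at hlim

noncomputable def qExp (q y : ℝ) : ℝ := qSeries (fun _ => 1) q y

noncomputable def qExpE (q y : ℝ) : ℝ := qSeries (fun k => q ^ (k * (k - 1) / 2)) q y

lemma qExp_q_mul (hq : |q| < 1) {y : ℝ} (hy : |y| < 1) :
    qExp q (q * y) = (1 - y) * qExp q y := by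
  have := qSeries_sub_qSeries_mul hq (fun _ => abs_one.le) hy
  rw [qExp, qExp]
  linarith

lemma qExpE_eq_one_add_mul_qExpE_q_mul (hq : |q| < 1) {y : ℝ} (hy : |y| < 1) :
    qExpE q y = (1 + y) * qExpE q (q * y) := by
  have hshift : qSeries (fun k => q ^ ((k + 1) * (k + 1 - 1) / 2)) q y = qExpE q (q * y) := by
    refine tsum_congr fun k => ?_
    beta_reduce
    rw [Nat.triangle_succ, pow_add, mul_pow]
    ring
  have := qSeries_sub_qSeries_mul (c := fun k => q ^ (k * (k - 1) / 2)) hq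
    (fun _ => abs_pow_le_one hq.le _) hy
  rw [hshift] at this
  unfold qExpE at this ⊢
  linarith

lemma qExp_mul_qExpE_neg_q_mul (hq : |q| < 1) {y : ℝ} (hy : |y| < 1) :
    qExp q (q * y) * qExpE q (-(q * y)) = qExp q y * qExpE q (-y) := by
  rw [qExp_q_mul hq hy, qExpE_eq_one_add_mul_qExpE_q_mul hq (y := -y) (by rwa [abs_neg]),
    mul_neg]
  ring

lemma qExp_mul_qExpE_neg_pow_mul (hq : |q| < 1) {x : ℝ} (hx : |x| < 1) (n : ℕ) :
    qExp q (q ^ n * x) * qExpE q (-(q ^ n * x)) = qExp q x * qExpE q (-x) := by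
  induction n with
  | zero => simp
  | succ n ih =>
    rw [pow_succ', mul_assoc,
      qExp_mul_qExpE_neg_q_mul hq ((abs_pow_mul_le hq.le n x).trans_lt hx), ih]

lemma tendsto_qExp_mul_qExpE_neg_pow_mul (hq : |q| < 1) {x : ℝ} (hx : |x| < 1) :
    Tendsto (fun n : ℕ => qExp q (q ^ n * x) * qExpE q (-(q ^ n * x))) atTop (𝓝 1) := by
  simpa [qExp, qExpE, ← mul_neg] using
    (tendsto_qSeries_pow_mul hq (fun _ => abs_one.le) hx).mul
      (tendsto_qSeries_pow_mul (c := fun k => q ^ (k * (k - 1) / 2)) hq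
        (fun _ => abs_pow_le_one hq.le _) (x := -x) (by rwa [abs_neg]))

lemma qExp_mul_qExpE_neg_eq_one (hq : |q| < 1) {x : ℝ} (hx : |x| < 1) :
    qExp q x * qExpE q (-x) = 1 :=
  tendsto_nhds_unique
    (by simpa only [qExp_mul_qExpE_neg_pow_mul hq hx] using tendsto_const_nhds)
    (tendsto_qExp_mul_qExpE_neg_pow_mul hq hx)

end QExp

/-- `e_q(x) · E_q(-x) = 1` for `0 < q < 1` and `|x| < 1`, where
`e_q(x) = Σ_{k=0}^∞ x^k / ((1-q)(1-q^2)⋯(1-q^k))` and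
`E_q(x) = Σ_{k=0}^∞ q^{k(k-1)/2} x^k / ((1-q)(1-q^2)⋯(1-q^k))`. -/
theorem qExp_mul_qExpE_neg (q : ℝ) (hq0 : 0 < q) (hq1 : q < 1)
    (x : ℝ) (hx : |x| < 1) :
    (∑' k : ℕ, x ^ k / ∏ i ∈ Finset.range k, (1 - q ^ (i + 1))) *
      (∑' k : ℕ,
        q ^ (k * (k - 1) / 2) * (-x) ^ k / ∏ i ∈ Finset.range k, (1 - q ^ (i + 1))) = 1 := by
  have hq : |q| < 1 := abs_lt.2 ⟨by linarith, hq1⟩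
  simpa [QExp.qExp, QExp.qExpE, QExp.qSeries, QExp.qPoch] using
    QExp.qExp_mul_qExpE_neg_eq_one hq hx
end
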